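/- Let t* = (1/2)·√((1/2)(1 + √(1 + 1024π²))) and f(a,b,c) = t*²(a² + b²) + 4π²(2c − ab)² − t*⁴. Let g₁ = (0,0,0), g₂ = (0,1,0), g₃ = (0,1,1), g₄ = (0,0,1), g₅ = (1,0,0), g₆ = (1,1,0), g₇ = (1,1,1), g₈ = (1,0,1) be elements of the discrete Heisenberg group H = ℤ³. Then for every (a,b,c) ∈ [0,1]³ there exists i ∈ {1,…,8} such that f(gᵢ⁻¹ · (a,b,c)) ≤ 0, where the product and inverse are taken in the Heisenberg group. (Consequently the H-translates of the dilated ellipsoid δ_{t*}(E₁) = {f ≤ 0} cover the fundamental domain of the Heisenberg nil-manifold, so every point of the nil-manifold is within sub-Riemannian distance t* of the origin.) -/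
import Mathlib

open Real

def heisMul (g₁ g₂ : ℝ × ℝ × ℝ) : ℝ × ℝ × ℝ :=
  (g₁.1 + g₂.1, g₁.2.1 + g₂.2.1, g₁.2.2 + g₂.2.2 + g₁.1 * g₂.2.1)

def heisInv (g : ℝ × ℝ × ℝ) : ℝ × ℝ × ℝ :=
  (-g.1, -g.2.1, g.1 * g.2.1 - g.2.2)

noncomputable def tStar : ℝ :=
  (1 / 2) * Real.sqrt ((1 / 2) * (1 + Real.sqrt (1 + 1024 * Real.pi ^ 2)))

noncomputable def fStar (g : ℝ × ℝ × ℝ) : ℝ :=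
  tStar ^ 2 * (g.1 ^ 2 + g.2.1 ^ 2) + 4 * Real.pi ^ 2 * (2 * g.2.2 - g.1 * g.2.1) ^ 2
    - tStar ^ 4

lemma hkey : tStar ^ 2 * (1/2) + 4 * Real.pi ^ 2 ≤ tStar ^ 4 := by
  have hx : (0:ℝ) ≤ 1 + 1024 * Real.pi ^ 2 := by positivity
  have hS : Real.sqrt (1 + 1024 * Real.pi ^ 2) ^ 2 = 1 + 1024 * Real.pi ^ 2 :=
    Real.sq_sqrt hx
  have hS0 : 0 ≤ Real.sqrt (1 + 1024 * Real.pi ^ 2) := Real.sqrt_nonneg _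
  have hS' : Real.sqrt (1 + 1024 * Real.pi ^ 2) ≤ 1 + 32 * Real.pi := by
    have h1 : (1:ℝ) + 1024 * Real.pi ^ 2 ≤ (1 + 32 * Real.pi) ^ 2 := by
      nlinarith [Real.pi_pos]
    calc Real.sqrt (1 + 1024 * Real.pi ^ 2) ≤ Real.sqrt ((1 + 32 * Real.pi) ^ 2) :=
          Real.sqrt_le_sqrt h1
      _ = 1 + 32 * Real.pi := Real.sqrt_sq (by positivity)
  have ht2 : tStar ^ 2 = (1 + Real.sqrt (1 + 1024 * Real.pi ^ 2)) / 8 := by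
    unfold tStar
    rw [mul_pow, Real.sq_sqrt (by positivity)]
    ring
  have ht4 : tStar ^ 4 = (tStar ^ 2) ^ 2 := by ring
  rw [ht4, ht2]
  nlinarith [Real.pi_gt_three]

lemma helper (α β χ a b c : ℝ)
    (h1 : (a - α) ^ 2 ≤ 1/4) (h2 : (b - β) ^ 2 ≤ 1/4)
    (h3 : (2 * c - 2 * χ - (a + α) * (b - β)) ^ 2 ≤ 1) :
    fStar (heisMul (heisInv (α, β, χ)) (a, b, c)) ≤ 0 := by
  have hk := hkey
  simp only [fStar, heisMul, heisInv]
  have hπ : (0:ℝ) < Real.pi := Real.pi_pos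
  have e1 : tStar ^ 2 * ((-α + a) ^ 2 + (-β + b) ^ 2) ≤ tStar ^ 2 * (1/2) := by
    have : (-α + a) ^ 2 + (-β + b) ^ 2 ≤ 1/2 := by nlinarith
    nlinarith [sq_nonneg tStar]
  have e2 : 4 * Real.pi ^ 2 * (2 * (α * β - χ + c + -α * b) - (-α + a) * (-β + b)) ^ 2
      ≤ 4 * Real.pi ^ 2 := by
    have heq : (2 * (α * β - χ + c + -α * b) - (-α + a) * (-β + b))
        = 2 * c - 2 * χ - (a + α) * (b - β) := by ring
    rw [heq]
    nlinarith [sq_nonneg Real.pi]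
  linarith

lemma sq1 (x : ℝ) (h1 : -1 ≤ x) (h2 : x ≤ 1) : x ^ 2 ≤ 1 := by nlinarith

set_option maxHeartbeats 1600000 in
theorem stmt15 :
    ∀ g : ℝ × ℝ × ℝ, g.1 ∈ Set.Icc (0:ℝ) 1 → g.2.1 ∈ Set.Icc (0:ℝ) 1 →
      g.2.2 ∈ Set.Icc (0:ℝ) 1 →
      ∃ γ ∈ ({(0,0,0), (0,1,0), (0,1,1), (0,0,1), (1,0,0), (1,1,0), (1,1,1), (1,0,1)} :
          Set (ℝ × ℝ × ℝ)),
        fStar (heisMul (heisInv γ) g) ≤ 0 := by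
  rintro ⟨a, b, c⟩ ⟨ha0, ha1⟩ ⟨hb0, hb1⟩ ⟨hc0, hc1⟩
  simp only at *
  rcases le_or_gt a (1/2) with ha | ha <;> rcases le_or_gt b (1/2) with hb | hb
  · rcases le_or_gt (2 * c - a * b) 1 with hχ | hχ
    · exact ⟨(0,0,0), by simp, helper 0 0 0 a b c (by nlinarith) (by nlinarith) (sq1 _ (by nlinarith) (by nlinarith))⟩
    · exact ⟨(0,0,1), by simp, helper 0 0 1 a b c (by nlinarith) (by nlinarith) (sq1 _ (by nlinarith) (by nlinarith))⟩
  · rcases le_or_gt (2 * c - a * (b - 1)) 1 with hχ | hχ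
    · exact ⟨(0,1,0), by simp, helper 0 1 0 a b c (by nlinarith) (by nlinarith) (sq1 _ (by nlinarith) (by nlinarith))⟩
    · exact ⟨(0,1,1), by simp, helper 0 1 1 a b c (by nlinarith) (by nlinarith) (sq1 _ (by nlinarith) (by nlinarith))⟩
  · rcases le_or_gt (2 * c - (a + 1) * b) 1 with hχ | hχ
    · exact ⟨(1,0,0), by simp, helper 1 0 0 a b c (by nlinarith) (by nlinarith) (sq1 _ (by nlinarith) (by nlinarith))⟩
    · exact ⟨(1,0,1), by simp, helper 1 0 1 a b c (by nlinarith) (by nlinarith) (sq1 _ (by nlinarith) (by nlinarith))⟩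
  · have hm1 : (0:ℝ) ≤ (a + 1) * (1 - b) := by
      apply mul_nonneg <;> linarith
    have hm2 : (a + 1) * (1 - b) ≤ 1 := by nlinarith
    have p1 : (a - 1) ^ 2 ≤ 1/4 := by nlinarith
    have p2 : (b - 1) ^ 2 ≤ 1/4 := by nlinarith
    rcases le_or_gt (2 * c - (a + 1) * (b - 1)) 1 with hχ | hχ
    · have q1 : -1 ≤ 2 * c - 2 * 0 - (a + 1) * (b - 1) := by nlinarith
      have q2 : 2 * c - 2 * 0 - (a + 1) * (b - 1) ≤ 1 := by nlinarith
      exact ⟨(1,1,0), by simp, helper 1 1 0 a b c p1 p2 (sq1 _ q1 q2)⟩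
    · have q1 : -1 ≤ 2 * c - 2 * 1 - (a + 1) * (b - 1) := by nlinarith
      have q2 : 2 * c - 2 * 1 - (a + 1) * (b - 1) ≤ 1 := by nlinarith
      exact ⟨(1,1,1), by simp, helper 1 1 1 a b c p1 p2 (sq1 _ q1 q2)⟩
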